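/- For natural numbers b ≤ c, one has the polynomial identity [b+c choose b]_q = ∑_{k=0}^{b} [b choose k]_q · [c choose k]_q · q^{k²}. -/
import Mathlib


open Finset Polynomial

/-- The Gaussian binomial coefficient `[n choose k]_q`, i.e. the q-binomial
coefficient `[n]!_q / ([k]!_q [n-k]!_q)`, as a polynomial in `q` with integer
coefficients, defined via the q-Pascal recurrence. It is `0` when `k > n`. -/
noncomputable def qbinom : ℕ → ℕ → Polynomial ℤ
  | _, 0 => 1
  | 0, _ + 1 => 0
  | n + 1, k + 1 => qbinom n k + Polynomial.X ^ (k + 1) * qbinom n (k + 1)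
  termination_by n k => (n, k)

lemma qbinom_zero_right (n : ℕ) : qbinom n 0 = 1 := by
  cases n <;> simp [qbinom]

lemma qbinom_succ_succ (n k : ℕ) :
    qbinom (n+1) (k+1) = qbinom n k + X ^ (k+1) * qbinom n (k+1) := by
  simp [qbinom]

lemma qbinom_eq_zero : ∀ n k, n < k → qbinom n k = 0
  | 0, k+1, _ => by simp [qbinom]
  | n+1, k+1, h => by
      rw [qbinom_succ_succ, qbinom_eq_zero n k (by omega),
        qbinom_eq_zero n (k+1) (by omega)]
      ring

lemma qbinom_self : ∀ n, qbinom n n = 1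
  | 0 => by simp [qbinom]
  | n+1 => by
      rw [qbinom_succ_succ, qbinom_self n, qbinom_eq_zero n (n+1) (by omega)]
      ring

lemma qbinom_aux1 : ∀ n : ℕ, qbinom (n+1) 1 = X^n + qbinom n 1
  | 0 => by simp [qbinom]
  | n+1 => by
      have e1 := qbinom_succ_succ (n+1) 0
      have e2 := qbinom_succ_succ n 0
      rw [qbinom_zero_right] at e1 e2
      have ih := qbinom_aux1 n
      linear_combination e1 + X * ih - e2

lemma qbinom_pascal' : ∀ d k : ℕ,
    qbinom (k + d + 1) (k + 1) = X ^ d * qbinom (k + d) k + qbinom (k + d) (k + 1)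
  | d, 0 => by simpa [qbinom_zero_right] using qbinom_aux1 d
  | 0, k+1 => by
      simp [qbinom_self, qbinom_eq_zero (k+1) (k+2) (by omega)]
  | e+1, k+1 => by
      have h1 : qbinom (k+e+2) (k+1) = X^(e+1) * qbinom (k+e+1) k + qbinom (k+e+1) (k+1) :=
        qbinom_pascal' (e+1) k
      have h2 := qbinom_pascal' e (k+1)
      rw [show k+1+e+1 = k+e+2 by omega, show k+1+e = k+e+1 by omega,
        show k+1+1 = k+2 by omega] at h2
      have g := qbinom_succ_succ (k+e+2) (k+1)
      have b1 := qbinom_succ_succ (k+e+1) k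
      have b2 := qbinom_succ_succ (k+e+1) (k+1)
      rw [show k+1+(e+1)+1 = k+e+3 by omega, show k+1+(e+1) = k+e+2 by omega,
        show k+1+1 = k+2 by omega]
      linear_combination g + h1 - X^(e+1)*b1 + X^(k+2)*h2 - b2
  termination_by d k => (k, d)

lemma qbinom_step (b c : ℕ) :
    (∑ k ∈ Finset.range (b+1), qbinom b k * qbinom (c+1) k * X^(k^2))
      + X^(b+1) * ∑ k ∈ Finset.range (b+2), qbinom (b+1) k * qbinom c k * X^(k^2)
    = ∑ k ∈ Finset.range (b+2), qbinom (b+1) k * qbinom (c+1) k * X^(k^2) := by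
  have hext : (∑ k ∈ Finset.range (b+2), qbinom b k * qbinom (c+1) k * X^(k^2))
      = ∑ k ∈ Finset.range (b+1), qbinom b k * qbinom (c+1) k * X^(k^2) := by
    rw [Finset.sum_range_succ, qbinom_eq_zero b (b+1) (by omega)]
    ring
  rw [← hext,
    Finset.sum_range_succ' (fun k => qbinom b k * qbinom (c+1) k * X^(k^2)) (b+1),
    Finset.sum_range_succ' (fun k => qbinom (b+1) k * qbinom c k * X^(k^2)) (b+1),
    Finset.sum_range_succ' (fun k => qbinom (b+1) k * qbinom (c+1) k * X^(k^2)) (b+1)]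
  have tele : ∑ j ∈ Finset.range (b+1),
      (qbinom b j * qbinom c j * X^(j^2+j+b+1)
        - qbinom b (j+1) * qbinom c (j+1) * X^((j+1)^2+(j+1)+b+1))
      = X^(b+1) := by
    rw [Finset.sum_range_sub' (fun j => qbinom b j * qbinom c j * X^(j^2+j+b+1)) (b+1)]
    simp [qbinom_zero_right, qbinom_eq_zero b (b+1) (by omega)]
  have hterm : ∀ j ∈ Finset.range (b+1),
      qbinom (b+1) (j+1) * qbinom (c+1) (j+1) * X^((j+1)^2)
      = (qbinom b (j+1) * qbinom (c+1) (j+1) * X^((j+1)^2)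
          + X^(b+1) * (qbinom (b+1) (j+1) * qbinom c (j+1) * X^((j+1)^2)))
        + (qbinom b j * qbinom c j * X^(j^2+j+b+1)
           - qbinom b (j+1) * qbinom c (j+1) * X^((j+1)^2+(j+1)+b+1)) := by
    intro j hj
    have hjb : j ≤ b := by
      have := Finset.mem_range.mp hj; omega
    obtain ⟨d, rfl⟩ := Nat.exists_eq_add_of_le hjb
    have p1 : qbinom (j+d+1) (j+1) = X^d * qbinom (j+d) j + qbinom (j+d) (j+1) :=
      qbinom_pascal' d j
    have p2 := qbinom_succ_succ c j
    have p3 := qbinom_succ_succ (j+d) j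
    linear_combination (X^((j+1)^2) * qbinom (c+1) (j+1)) * p1
      + (X^((j+1)^2+d) * qbinom (j+d) j) * p2
      - (X^((j+1)^2+(j+d)+1) * qbinom c (j+1)) * p3
  rw [Finset.sum_congr rfl hterm, Finset.sum_add_distrib, Finset.sum_add_distrib,
    ← Finset.mul_sum, tele]
  simp [qbinom_zero_right]
  ring

lemma qbinom_key : ∀ b c : ℕ,
    qbinom (b + c) b = ∑ k ∈ Finset.range (b+1), qbinom b k * qbinom c k * X ^ (k^2)
  | 0, c => by simp [qbinom_zero_right]
  | b+1, 0 => by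
      rw [Finset.sum_eq_single 0]
      · simp [qbinom_zero_right, qbinom_self]
      · intro k _ hk
        obtain ⟨j, rfl⟩ := Nat.exists_eq_succ_of_ne_zero hk
        simp [qbinom_eq_zero 0 (j+1) (by omega)]
      · intro h; exact absurd (Finset.mem_range.mpr (by omega)) h
  | b+1, c+1 => by
      have h1 := qbinom_key b (c+1)
      have h2 := qbinom_key (b+1) c
      rw [show b+(c+1) = b+c+1 by omega] at h1
      rw [show (b+1)+c = b+c+1 by omega] at h2
      rw [show b+1+(c+1) = b+c+1+1 by omega, qbinom_succ_succ (b+c+1) b, h1, h2,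
        show b+1+1 = b+2 by omega]
      exact qbinom_step b c
  termination_by b c => (b, c)

/-- `[b+c choose b]_q = ∑_{k=0}^{b} [b choose k]_q [c choose k]_q q^{k²}` for `b ≤ c`. -/
theorem qbinom_sum_sq (b c : ℕ) (hbc : b ≤ c) :
    qbinom (b + c) b =
      ∑ k ∈ Finset.range (b + 1),
        qbinom b k * qbinom c k * Polynomial.X ^ (k ^ 2) := by
  exact qbinom_key b c
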